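/- If G is an O-game, then G + G + G is not an O-game. -/

import Mathlib

/-!
The types of sums obey the paper's addition table; since the table is symmetric, all its entries
are proved together by induction on pairs of games. For an O-game `G`, the table makes `G + G` an
N- or Q-game. An N-game plus an O-game is never an O-game. If `G + G` is a Q-game and
`G + G + G` an O-game, take an option `G'` of `G` (an N-game) with a P-option `A`. The N-game
`G' + G + G` needs a P-option; it is not `G'' + (G + G)`, as nothing plus a Q-game is a P-game, so
it replaces one copy of `G` by an N-game `C`. Moving `G'` to `A` there gives the O-game
`A + G + C`, but `A + G` is an O- or Q-game and neither plus an N-game is an O-game.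
-/

/-- Three-player impartial games: well-founded game trees. -/
inductive G3 : Type 1 where
  | mk : (ι : Type) → (ι → G3) → G3

namespace G3

/-- The index type of options (moves) of a game. -/
def moves : G3 → Type
  | mk ι _ => ι

/-- The option of a game corresponding to a move. -/
def moveFn : (g : G3) → moves g → G3
  | mk _ f => f

/-- Disjunctive sum: move in exactly one component. -/
noncomputable def add : G3 → G3 → G3 :=
  G3.rec (fun ι f ihf =>
    G3.rec (fun κ g ihg =>
      mk (ι ⊕ κ) (fun x =>
        match x with
        | Sum.inl i => ihf i (mk κ g)
        | Sum.inr j => ihg j)))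

/-- The four outcome types of a three-player impartial game. -/
inductive PType : Type
  | N | O | P | Q
deriving DecidableEq

open Classical in
/-- The type of a game: `N` iff some option is a `P`-game; `O` iff it has at least
one option and all options are `N`-games; `P` iff all options are `O`-games;
`Q` otherwise. -/
noncomputable def typ : G3 → PType
  | mk ι f =>
    if ∃ i, typ (f i) = PType.P then PType.N
    else if Nonempty ι ∧ ∀ i, typ (f i) = PType.N then PType.O
    else if ∀ i, typ (f i) = PType.O then PType.P
    else PType.Q

/-- The Nim heap of size `n`: options are heaps of sizes `0, …, n-1`. -/
def nim : ℕ → G3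
  | n => mk (Fin n) (fun i => nim i)
termination_by n => n
decreasing_by exact i.isLt

/-- The sum of `n` Nim heaps of size 1. -/
noncomputable def ones : ℕ → G3
  | 0 => nim 0
  | n + 1 => add (ones n) (nim 1)

open PType

def options (X : G3) : Set G3 := Set.range (moveFn X)

open Classical in
noncomputable def typOfSet (s : Set PType) : PType :=
  if P ∈ s then N else if s.Nonempty ∧ s ⊆ {N} then O else if s ⊆ {O} then P else Q

theorem typ_eq_typOfSet (X : G3) : typ X = typOfSet (typ '' options X) := by
  classical
  obtain ⟨ι, f⟩ := X
  rw [options, ← Set.range_comp]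
  simp only [typ, typOfSet, Set.mem_range, Set.range_nonempty_iff_nonempty, Set.range_subset_iff,
    Set.mem_singleton_iff, Function.comp_apply]
  rfl

theorem typOfSet_eq_N_iff {s : Set PType} : typOfSet s = N ↔ P ∈ s := by
  unfold typOfSet; split_ifs <;> grind

theorem typOfSet_eq_O_iff {s : Set PType} : typOfSet s = O ↔ s.Nonempty ∧ s ⊆ {N} := by
  unfold typOfSet; split_ifs <;> grind

theorem typOfSet_eq_P_iff {s : Set PType} : typOfSet s = P ↔ s ⊆ {O} := by
  unfold typOfSet; split_ifs <;> grind [Set.Nonempty]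

variable {X Y Z A B C : G3}

theorem typ_eq_N_iff : typ X = N ↔ ∃ Z ∈ options X, typ Z = P := by
  rw [typ_eq_typOfSet, typOfSet_eq_N_iff, Set.mem_image]

theorem typ_eq_O_iff : typ X = O ↔ (options X).Nonempty ∧ ∀ Z ∈ options X, typ Z = N := by
  rw [typ_eq_typOfSet, typOfSet_eq_O_iff, Set.image_nonempty, Set.subset_singleton_iff,
    Set.forall_mem_image]

theorem typ_eq_P_iff : typ X = P ↔ ∀ Z ∈ options X, typ Z = O := by
  rw [typ_eq_typOfSet, typOfSet_eq_P_iff, Set.subset_singleton_iff, Set.forall_mem_image]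

theorem typ_eq_N_of_mem_options (hX : typ X = O) (hZ : Z ∈ options X) : typ Z = N :=
  (typ_eq_O_iff.mp hX).2 Z hZ

theorem typ_eq_O_of_mem_options (hX : typ X = P) (hZ : Z ∈ options X) : typ Z = O :=
  typ_eq_P_iff.mp hX Z hZ

theorem typ_ne_O_of_mem_options (hZ : Z ∈ options X) (h : typ Z ≠ N) : typ X ≠ O :=
  fun hX => h (typ_eq_N_of_mem_options hX hZ)

theorem typ_ne_P_of_mem_options (hZ : Z ∈ options X) (h : typ Z ≠ O) : typ X ≠ P :=
  fun hX => h (typ_eq_O_of_mem_options hX hZ)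

theorem typ_ne_P_of_mem_options_of_Q (hX : typ X = Q) (hZ : Z ∈ options X) : typ Z ≠ P :=
  fun hZP => absurd (hX.symm.trans (typ_eq_N_iff.mpr ⟨Z, hZ, hZP⟩)) (by decide)

theorem exists_mem_options_N_or_Q (hX : typ X = Q) :
    ∃ Z ∈ options X, typ Z = N ∨ typ Z = Q := by
  have hnP : typ X ≠ P := by rw [hX]; decide
  obtain ⟨Z, hZ, hZO⟩ : ∃ Z ∈ options X, typ Z ≠ O := by simpa [typ_eq_P_iff] using hnP
  refine ⟨Z, hZ, ?_⟩
  cases hZt : typ Z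
  · exact .inl rfl
  · exact absurd hZt hZO
  · exact absurd hZt (typ_ne_P_of_mem_options_of_Q hX hZ)
  · exact .inr rfl

theorem exists_mem_options_O_or_Q (hX : typ X = Q) :
    ∃ Z ∈ options X, typ Z = O ∨ typ Z = Q := by
  obtain ⟨Z, hZ, hZN⟩ : ∃ Z ∈ options X, typ Z ≠ N := by
    by_contra! hN
    rcases (options X).eq_empty_or_nonempty with he | hne
    · exact absurd (hX.symm.trans (typ_eq_P_iff.mpr (by simp [he]))) (by decide)
    · exact absurd (hX.symm.trans (typ_eq_O_iff.mpr ⟨hne, hN⟩)) (by decide)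
  refine ⟨Z, hZ, ?_⟩
  cases hZt : typ Z
  · exact absurd hZt hZN
  · exact .inl rfl
  · exact absurd hZt (typ_ne_P_of_mem_options_of_Q hX hZ)
  · exact .inr rfl

theorem options_add (X Y : G3) :
    options (add X Y) = (fun Z => add Z Y) '' options X ∪ add X '' options Y := by
  obtain ⟨ι, f⟩ := X
  obtain ⟨κ, g⟩ := Y
  simp only [options, ← Set.range_comp, ← Set.Sum.elim_range]
  congr
  funext k
  cases k <;> rfl

theorem mem_options_add : Z ∈ options (add X Y) ↔
    (∃ X' ∈ options X, add X' Y = Z) ∨ ∃ Y' ∈ options Y, add X Y' = Z := by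
  rw [options_add, Set.mem_union, Set.mem_image, Set.mem_image]

theorem add_mem_options_add_left (h : Z ∈ options X) : add Z Y ∈ options (add X Y) :=
  mem_options_add.mpr (.inl ⟨Z, h, rfl⟩)

theorem add_mem_options_add_right (h : Z ∈ options Y) : add X Z ∈ options (add X Y) :=
  mem_options_add.mpr (.inr ⟨Z, h, rfl⟩)

theorem typ_add_ne_N (hl : ∀ X' ∈ options X, typ (add X' Y) ≠ P)
    (hr : ∀ Y' ∈ options Y, typ (add X Y') ≠ P) : typ (add X Y) ≠ N := by
  intro h
  obtain ⟨W, hW, hWP⟩ := typ_eq_N_iff.mp h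
  rcases mem_options_add.mp hW with ⟨X', hX', rfl⟩ | ⟨Y', hY', rfl⟩
  exacts [hl X' hX' hWP, hr Y' hY' hWP]

theorem typ_add_ne_O (hl : ∀ X' ∈ options X, typ (add X' Y) ≠ N)
    (hr : ∀ Y' ∈ options Y, typ (add X Y') ≠ N) : typ (add X Y) ≠ O := by
  intro h
  obtain ⟨W, hW⟩ := (typ_eq_O_iff.mp h).1
  rcases mem_options_add.mp hW with ⟨X', hX', rfl⟩ | ⟨Y', hY', rfl⟩
  exacts [hl X' hX' (typ_eq_N_of_mem_options h hW), hr Y' hY' (typ_eq_N_of_mem_options h hW)]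

theorem typ_add (X Y : G3) : typ (add X Y) =
    typOfSet ((fun Z => typ (add Z Y)) '' options X ∪ (fun Z => typ (add X Z)) '' options Y) := by
  rw [typ_eq_typOfSet, options_add, Set.image_union, Set.image_image, Set.image_image]

theorem typ_add_comm (X Y : G3) : typ (add X Y) = typ (add Y X) := by
  induction X generalizing Y with | mk ι f ihX =>
  induction Y with | mk κ g ihY =>
  rw [typ_add, typ_add, Set.union_comm]
  congr 2 <;> refine Set.image_congr ?_ <;> rintro _ ⟨i, rfl⟩
  · exact ihY i
  · exact ihX i _

theorem typ_add_assoc (X Y Z : G3) : typ (add (add X Y) Z) = typ (add X (add Y Z)) := by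
  induction X generalizing Y Z with | mk ι f ihX =>
  induction Y generalizing Z with | mk κ g ihY =>
  induction Z with | mk μ e ihZ =>
  rw [typ_add, typ_add, options_add, options_add, Set.image_union, Set.image_union,
    Set.image_image, Set.image_image, Set.image_image, Set.image_image, Set.union_assoc]
  refine congrArg typOfSet (congrArg₂ _ ?_ (congrArg₂ _ ?_ ?_)) <;>
    refine Set.image_congr ?_ <;> rintro _ ⟨i, rfl⟩
  · exact ihX i _ _
  · exact ihY i _
  · exact ihZ i

theorem typ_add_right_comm (X Y Z : G3) : typ (add (add X Y) Z) = typ (add (add X Z) Y) := by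
  induction X generalizing Y Z with | mk ι f ihX =>
  induction Y generalizing Z with | mk κ g ihY =>
  induction Z with | mk μ e ihZ =>
  rw [typ_add, typ_add, options_add, options_add, Set.image_union, Set.image_union,
    Set.image_image, Set.image_image, Set.image_image, Set.image_image, Set.union_right_comm]
  refine congrArg typOfSet (congrArg₂ _ (congrArg₂ _ ?_ ?_) ?_) <;>
    refine Set.image_congr ?_ <;> rintro _ ⟨i, rfl⟩
  · exact ihX i _ _
  · exact ihZ i
  · exact ihY i _

/-- The paper's addition table, recorded by the types it rules out for a sum of an `a`-game and a
`b`-game. -/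
def excludedAddTypes : PType → PType → List PType
  | N, N => [P]
  | N, O | O, N => [O]
  | N, P | P, N => [O, P]
  | N, Q | Q, N => [O, P]
  | O, O => [O, P]
  | O, P | P, O => [N, P]
  | O, Q | Q, O => [P]
  | P, P => [N, O]
  | P, Q | Q, P => [N, O, P]
  | Q, Q => [N, P]

theorem excludedAddTypes_comm (a b : PType) : excludedAddTypes a b = excludedAddTypes b a := by
  cases a <;> cases b <;> rfl

def AddTableHolds (X Y : G3) : Prop := typ (add X Y) ∉ excludedAddTypes (typ X) (typ Y)

theorem AddTableHolds.symm (h : AddTableHolds X Y) : AddTableHolds Y X := by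
  rwa [AddTableHolds, typ_add_comm, excludedAddTypes_comm]

theorem AddTableHolds.ne {a b c : PType} (h : AddTableHolds X Y) (hX : typ X = a) (hY : typ Y = b)
    (hc : c ∈ excludedAddTypes a b := by decide) : typ (add X Y) ≠ c := by
  rintro rfl
  rw [AddTableHolds, hX, hY] at h
  exact h hc

theorem AddTableHolds.typ_eq_N_of_add_O_eq_P (h : AddTableHolds X Y) (hY : typ Y = O)
    (hXY : typ (add X Y) = P) : typ X = N := by
  cases hX : typ X <;> first | rfl | exact absurd hXY (h.ne hX hY)

theorem AddTableHolds.typ_eq_O_of_add_N_eq_P (h : AddTableHolds X Y) (hY : typ Y = N)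
    (hXY : typ (add X Y) = P) : typ X = O := by
  cases hX : typ X <;> first | rfl | exact absurd hXY (h.ne hX hY)

theorem AddTableHolds.of_forall_ne {a b : PType} (hX : typ X = a) (hY : typ Y = b)
    (h : (excludedAddTypes a b).Forall (typ (add X Y) ≠ ·)) : AddTableHolds X Y := by
  rw [AddTableHolds, hX, hY]
  exact fun hc => List.forall_iff_forall_mem.mp h _ hc rfl

def IsOption (Z X : G3) : Prop := Z ∈ options X

theorem wellFounded_isOption : WellFounded IsOption := by
  refine ⟨fun X => ?_⟩
  induction X with | mk ι f ih =>
  exact ⟨_, by rintro _ ⟨i, rfl⟩; exact ih i⟩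

def AddTableBelow (X Y : G3) : Prop :=
  ∀ A B, Relation.TransGen (Prod.GameAdd IsOption IsOption) (A, B) (X, Y) → AddTableHolds A B

namespace AddTableBelow

theorem left (h : AddTableBelow X Y) (hZ : Z ∈ options X) : AddTableBelow Z Y :=
  fun A B hAB => h A B (hAB.tail (.fst hZ))

theorem right (h : AddTableBelow X Y) (hZ : Z ∈ options Y) : AddTableBelow X Z :=
  fun A B hAB => h A B (hAB.tail (.snd hZ))

theorem holds_left (h : AddTableBelow X Y) (hZ : Z ∈ options X) : AddTableHolds Z Y :=
  h _ _ (.single (.fst hZ))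

theorem holds_right (h : AddTableBelow X Y) (hZ : Z ∈ options Y) : AddTableHolds X Z :=
  h _ _ (.single (.snd hZ))

theorem symm (h : AddTableBelow X Y) : AddTableBelow Y X := fun A B hAB =>
  (h B A (hAB.lift Prod.swap fun _ _ => (Prod.gameAdd_swap_swap _ _ _ _).mpr)).symm

/-- If `X + Y` were a P-game, some option `Y'` of `Y` is an N- or Q-game with `X + Y'` an O-game,
which forces `X` and `Y'` to be Q-games; an N- or Q-option `X'` of `X` then makes `X' + Y'` a sum of
two Q-games that is an N-game. -/
theorem add_Q_ne_P (h : AddTableBelow X Y) (hY : typ Y = Q) : typ (add X Y) ≠ P := by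
  intro hXY
  obtain ⟨Y', hY', hY'NQ⟩ := exists_mem_options_N_or_Q hY
  have hXY' : typ (add X Y') = O := typ_eq_O_of_mem_options hXY (add_mem_options_add_right hY')
  have hXQ : typ X = Q := by
    cases hX : typ X
    · obtain ⟨X', hX', hX'P⟩ := typ_eq_N_iff.mp hX
      exact absurd (typ_eq_O_of_mem_options hXY (add_mem_options_add_left hX'))
        ((h.holds_left hX').ne hX'P hY)
    · obtain ⟨X', hX'⟩ := (typ_eq_O_iff.mp hX).1
      exact absurd (typ_eq_O_of_mem_options hXY (add_mem_options_add_left hX'))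
        ((h.holds_left hX').ne (typ_eq_N_of_mem_options hX hX') hY)
    · rcases hY'NQ with hY't | hY't <;> exact absurd hXY' ((h.holds_right hY').ne hX hY't)
    · rfl
  have hY'Q : typ Y' = Q := hY'NQ.resolve_left fun hY'N =>
    absurd hXY' ((h.holds_right hY').ne hXQ hY'N)
  obtain ⟨X', hX', hX'NQ⟩ := exists_mem_options_N_or_Q hXQ
  have hX'Y : typ (add X' Y) = O := typ_eq_O_of_mem_options hXY (add_mem_options_add_left hX')
  have hX'Q : typ X' = Q := hX'NQ.resolve_left fun hX'N =>
    absurd hX'Y ((h.holds_left hX').ne hX'N hY)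
  exact absurd (typ_eq_N_of_mem_options hXY' (add_mem_options_add_left hX'))
    (((h.left hX').holds_right hY').ne hX'Q hY'Q)

theorem exists_N_of_O_add_O (h : AddTableBelow X Y) (hX : typ X = O) (hY : typ Y = O)
    (hXY : typ (add X Y) = O) :
    ∃ X' ∈ options X, ∃ B ∈ options X', typ B = N ∧ typ (add B Y) = P := by
  obtain ⟨X', hX'⟩ := (typ_eq_O_iff.mp hX).1
  have hX'N := typ_eq_N_of_mem_options hX hX'
  obtain ⟨W, hW, hWP⟩ :=
    typ_eq_N_iff.mp (typ_eq_N_of_mem_options hXY (add_mem_options_add_left hX'))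
  rcases mem_options_add.mp hW with ⟨B, hB, rfl⟩ | ⟨Y', hY', rfl⟩
  · exact ⟨X', hX', B, hB, ((h.left hX').holds_left hB).typ_eq_N_of_add_O_eq_P hY hWP, hWP⟩
  · exact absurd hWP (((h.left hX').holds_right hY').ne hX'N (typ_eq_N_of_mem_options hY hY'))

theorem add_ne_P_of_add_O_eq_P {B' Y' : G3} (h : AddTableBelow B Y) (hY : typ Y = O)
    (hBY : typ (add B Y) = P) (hB' : B' ∈ options B) (hY' : Y' ∈ options Y)
    (hC : C ∈ options Y') (hCN : typ C = N) : typ (add B' C) ≠ P := by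
  intro hB'C
  have hB'O : typ B' = O :=
    (((h.left hB').right hY').holds_right hC).typ_eq_O_of_add_N_eq_P hCN hB'C
  exact absurd (typ_eq_O_of_mem_options hBY (add_mem_options_add_left hB'))
    ((h.holds_left hB').ne hB'O hY)

/-- If `X + Y` were an O-game, `X` has a second-level option `B` with `B + Y` a P-game and `Y` one
`C` with `X + C` a P-game. Then `B + C` is an N-game, and each of its candidate P-options yields
an O-game sum of two O-games one level down. -/
theorem O_add_O_ne_O (h : AddTableBelow X Y) (hX : typ X = O) (hY : typ Y = O) :
    typ (add X Y) ≠ O := by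
  intro hXY
  obtain ⟨X', hX', B, hB, hBN, hBY⟩ := h.exists_N_of_O_add_O hX hY hXY
  obtain ⟨Y', hY', C, hC, hCN, hCX⟩ :=
    h.symm.exists_N_of_O_add_O hY hX (by rwa [typ_add_comm])
  have hBC : typ (add B C) = N := typ_eq_N_of_mem_options
    (typ_eq_O_of_mem_options hBY (add_mem_options_add_right hY')) (add_mem_options_add_right hC)
  obtain ⟨W, hW, hWP⟩ := typ_eq_N_iff.mp hBC
  rcases mem_options_add.mp hW with ⟨B', hB', rfl⟩ | ⟨C', hC', rfl⟩
  · exact ((h.left hX').left hB).add_ne_P_of_add_O_eq_P hY hBY hB' hY' hC hCN hWP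
  · rw [typ_add_comm] at hWP
    exact ((h.symm.left hY').left hC).add_ne_P_of_add_O_eq_P hX hCX hC' hX' hB hBN hWP

theorem holds_of_N_of_N (h : AddTableBelow X Y) (hX : typ X = N) (hY : typ Y = N) :
    AddTableHolds X Y := by
  obtain ⟨X', hX', hX'P⟩ := typ_eq_N_iff.mp hX
  exact .of_forall_ne hX hY
    (typ_ne_P_of_mem_options (add_mem_options_add_left hX') ((h.holds_left hX').ne hX'P hY))

theorem holds_of_N_of_O (h : AddTableBelow X Y) (hX : typ X = N) (hY : typ Y = O) :
    AddTableHolds X Y := by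
  obtain ⟨X', hX', hX'P⟩ := typ_eq_N_iff.mp hX
  exact .of_forall_ne hX hY
    (typ_ne_O_of_mem_options (add_mem_options_add_left hX') ((h.holds_left hX').ne hX'P hY))

theorem holds_of_N_of_Q (h : AddTableBelow X Y) (hX : typ X = N) (hY : typ Y = Q) :
    AddTableHolds X Y := by
  obtain ⟨X', hX', hX'P⟩ := typ_eq_N_iff.mp hX
  exact .of_forall_ne hX hY ⟨typ_ne_O_of_mem_options (add_mem_options_add_left hX')
    ((h.holds_left hX').ne hX'P hY), h.add_Q_ne_P hY⟩

theorem holds_of_O_of_O (h : AddTableBelow X Y) (hX : typ X = O) (hY : typ Y = O) :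
    AddTableHolds X Y := by
  obtain ⟨X', hX'⟩ := (typ_eq_O_iff.mp hX).1
  exact .of_forall_ne hX hY ⟨h.O_add_O_ne_O hX hY, typ_ne_P_of_mem_options
    (add_mem_options_add_left hX') ((h.holds_left hX').ne (typ_eq_N_of_mem_options hX hX') hY)⟩

theorem holds_of_O_of_Q (h : AddTableBelow X Y) (hX : typ X = O) (hY : typ Y = Q) :
    AddTableHolds X Y :=
  .of_forall_ne hX hY (h.add_Q_ne_P hY)

theorem holds_of_P_of_N (h : AddTableBelow X Y) (hX : typ X = P) (hY : typ Y = N) :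
    AddTableHolds X Y := by
  obtain ⟨Y', hY', hY'P⟩ := typ_eq_N_iff.mp hY
  exact .of_forall_ne hX hY
    ⟨typ_ne_O_of_mem_options (add_mem_options_add_right hY') ((h.holds_right hY').ne hX hY'P),
      typ_ne_P_of_mem_options (add_mem_options_add_right hY') ((h.holds_right hY').ne hX hY'P)⟩

theorem holds_of_P_of_O (h : AddTableBelow X Y) (hX : typ X = P) (hY : typ Y = O) :
    AddTableHolds X Y := by
  obtain ⟨Y', hY'⟩ := (typ_eq_O_iff.mp hY).1
  refine .of_forall_ne hX hY ⟨typ_add_ne_N (fun X' hX' => ?_) (fun Y' hY' => ?_), ?_⟩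
  · exact (h.holds_left hX').ne (typ_eq_O_of_mem_options hX hX') hY
  · exact (h.holds_right hY').ne hX (typ_eq_N_of_mem_options hY hY')
  · exact typ_ne_P_of_mem_options (add_mem_options_add_right hY')
      ((h.holds_right hY').ne hX (typ_eq_N_of_mem_options hY hY'))

theorem holds_of_P_of_P (h : AddTableBelow X Y) (hX : typ X = P) (hY : typ Y = P) :
    AddTableHolds X Y := by
  refine .of_forall_ne hX hY ⟨typ_add_ne_N (fun X' hX' => ?_) (fun Y' hY' => ?_),
    typ_add_ne_O (fun X' hX' => ?_) (fun Y' hY' => ?_)⟩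
  all_goals first
    | exact (h.holds_left hX').ne (typ_eq_O_of_mem_options hX hX') hY
    | exact (h.holds_right hY').ne hX (typ_eq_O_of_mem_options hY hY')

theorem holds_of_P_of_Q (h : AddTableBelow X Y) (hX : typ X = P) (hY : typ Y = Q) :
    AddTableHolds X Y := by
  obtain ⟨Y₀, hY₀, hY₀OQ⟩ := exists_mem_options_O_or_Q hY
  refine .of_forall_ne hX hY ⟨typ_add_ne_N (fun X' hX' => ?_) (fun Y' hY' => ?_), ?_,
    h.add_Q_ne_P hY⟩
  · exact (h.left hX').add_Q_ne_P hY
  · cases hY't : typ Y'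
    all_goals first
      | exact absurd hY't (typ_ne_P_of_mem_options_of_Q hY hY')
      | exact (h.holds_right hY').ne hX hY't
  · refine typ_ne_O_of_mem_options (add_mem_options_add_right hY₀) ?_
    rcases hY₀OQ with hY₀t | hY₀t <;> exact (h.holds_right hY₀).ne hX hY₀t

theorem holds_of_Q_of_Q (h : AddTableBelow X Y) (hX : typ X = Q) (hY : typ Y = Q) :
    AddTableHolds X Y := by
  refine .of_forall_ne hX hY ⟨typ_add_ne_N (fun X' hX' => ?_) (fun Y' hY' => ?_),
    h.add_Q_ne_P hY⟩
  · exact (h.left hX').add_Q_ne_P hY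
  · rw [typ_add_comm]
    exact (h.symm.left hY').add_Q_ne_P hX

theorem holds (h : AddTableBelow X Y) : AddTableHolds X Y := by
  cases hX : typ X <;> cases hY : typ Y
  · exact h.holds_of_N_of_N hX hY
  · exact h.holds_of_N_of_O hX hY
  · exact (h.symm.holds_of_P_of_N hY hX).symm
  · exact h.holds_of_N_of_Q hX hY
  · exact (h.symm.holds_of_N_of_O hY hX).symm
  · exact h.holds_of_O_of_O hX hY
  · exact (h.symm.holds_of_P_of_O hY hX).symm
  · exact h.holds_of_O_of_Q hX hY
  · exact h.holds_of_P_of_N hX hY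
  · exact h.holds_of_P_of_O hX hY
  · exact h.holds_of_P_of_P hX hY
  · exact h.holds_of_P_of_Q hX hY
  · exact (h.symm.holds_of_N_of_Q hY hX).symm
  · exact (h.symm.holds_of_O_of_Q hY hX).symm
  · exact (h.symm.holds_of_P_of_Q hY hX).symm
  · exact h.holds_of_Q_of_Q hX hY

end AddTableBelow

theorem addTableHolds (X Y : G3) : AddTableHolds X Y := by
  suffices ∀ p : G3 × G3, AddTableHolds p.1 p.2 from this (X, Y)
  intro p
  induction p using (wellFounded_isOption.prod_gameAdd wellFounded_isOption).transGen.induction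
    with | _ p ih =>
  exact AddTableBelow.holds fun A B hAB => ih (A, B) hAB

theorem typ_add_ne_P_of_Q (hY : typ Y = Q) : typ (add X Y) ≠ P :=
  AddTableBelow.add_Q_ne_P (fun A B _ => addTableHolds A B) hY

theorem typ_add_add_ne_O (hA : typ A = P) (hB : typ B = O) (hC : typ C = N) :
    typ (add (add A B) C) ≠ O := by
  cases hAB : typ (add A B)
  all_goals first
    | exact absurd hAB ((addTableHolds A B).ne hA hB)
    | exact (addTableHolds (add A B) C).ne hAB hC

theorem typ_add_add_ne_O_of_Q {G : G3} (hG : typ G = O) (hGG : typ (add G G) = Q) :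
    typ (add (add G G) G) ≠ O := by
  intro hT
  obtain ⟨Z, hZ⟩ := (typ_eq_O_iff.mp hG).1
  obtain ⟨A, hA, hAP⟩ := typ_eq_N_iff.mp (typ_eq_N_of_mem_options hG hZ)
  have hZGG : typ (add (add Z G) G) = N :=
    typ_eq_N_of_mem_options hT (add_mem_options_add_left (add_mem_options_add_left hZ))
  obtain ⟨W, hW, hWP⟩ := typ_eq_N_iff.mp hZGG
  rcases mem_options_add.mp hW with ⟨V, hV, rfl⟩ | ⟨G', hG', rfl⟩
  · rcases mem_options_add.mp hV with ⟨Z', hZ', rfl⟩ | ⟨G', hG', rfl⟩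
    · rw [typ_add_assoc] at hWP
      exact typ_add_ne_P_of_Q hGG hWP
    · have hAG' : typ (add (add A G') G) = O :=
        typ_eq_O_of_mem_options hWP (add_mem_options_add_left (add_mem_options_add_left hA))
      rw [typ_add_right_comm] at hAG'
      exact typ_add_add_ne_O hAP hG (typ_eq_N_of_mem_options hG hG') hAG'
  · exact typ_add_add_ne_O hAP hG (typ_eq_N_of_mem_options hG hG')
      (typ_eq_O_of_mem_options hWP (add_mem_options_add_left (add_mem_options_add_left hA)))

theorem O_treble_not_O (G : G3) (hG : typ G = PType.O) :
    typ (add (add G G) G) ≠ PType.O := by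
  cases hGG : typ (add G G)
  · exact (addTableHolds (add G G) G).ne hGG hG
  · exact absurd hGG ((addTableHolds G G).ne hG hG)
  · exact absurd hGG ((addTableHolds G G).ne hG hG)
  · exact typ_add_add_ne_O_of_Q hG hGG

end G3
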